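/- The range of the embedding f ↦ (J_K f) ∘ σ_K of L^∞(K) into C_0([0, λ(K)]) is exactly Lip_0([0, λ(K)]), the Lipschitz functions vanishing at 0. In particular, for each G ∈ Lip_0([0, λ(K)]) with a.e. derivative g, one has G = (J_K f) ∘ σ_K where f = g ∘ π_K. -/

import Mathlib

open MeasureTheory Set

/-- Measure projection `π_K`. -/
noncomputable def piProj (K : Set ℝ) (x : ℝ) : ℝ :=
  (volume (Set.Icc (sInf K) x ∩ K)).toReal

/-- Left-endpoint selector `σ_K`. -/
noncomputable def sigmaSel (K : Set ℝ) (t : ℝ) : ℝ :=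
  sInf {x ∈ K | piProj K x = t}

/-- Primitive `J_K f`. -/
noncomputable def JPrim (K : Set ℝ) (f : ℝ → ℝ) (x : ℝ) : ℝ :=
  ∫ y in Set.Icc (sInf K) x ∩ K, f y

/-!
`π_K` is 1-Lipschitz and maps `K` onto `[0, λ(K)]`, with `π_K ∘ σ_K = id` there. Between `x ≤ y`
the primitive `J_K f` increases by the integral of `f` over `(x, y] ∩ K`, a set of measure
`π_K y - π_K x`, so `J_K f ∘ σ_K` is `‖f‖_∞`-Lipschitz.

Conversely, up to a null set `(-∞, σ_K t] ∩ K` is the part of `K` where `π_K ≤ t`, hence `π_K`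
pushes `λ|_K` forward to `λ|_[0, λ(K)]` and `J_K (g ∘ π_K) (σ_K t) = ∫₀ᵗ g`, which equals `G t` by
the fundamental theorem of calculus for Lipschitz, hence absolutely continuous, functions.
-/

theorem LipschitzOnWith.integral_eq_sub_of_ae_hasDerivAt {G g : ℝ → ℝ} {L : NNReal} {a b : ℝ}
    (hab : a ≤ b) (hG : LipschitzOnWith L G (Icc a b))
    (hderiv : ∀ᵐ x ∂volume.restrict (Icc a b), HasDerivAt G (g x) x) :
    ∫ x in a..b, g x = G b - G a := by
  rw [← uIcc_of_le hab] at hG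
  rw [← hG.absolutelyContinuousOnInterval.integral_deriv_eq_sub]
  refine intervalIntegral.integral_congr_ae ?_
  rw [ae_restrict_iff' measurableSet_Icc] at hderiv
  filter_upwards [hderiv] with x hx hxab
  rw [uIoc_of_le hab] at hxab
  exact (hx (Ioc_subset_Icc_self hxab)).deriv.symm

variable {K : Set ℝ}

lemma Icc_sInf_inter_eq_Iic_inter (hK : BddBelow K) (x : ℝ) :
    Icc (sInf K) x ∩ K = Iic x ∩ K := by
  ext y
  exact ⟨fun h => ⟨h.1.2, h.2⟩, fun h => ⟨⟨csInf_le hK h.2, h.1⟩, h.2⟩⟩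

lemma piProj_eq_measureReal (hK : BddBelow K) (x : ℝ) :
    piProj K x = volume.real (Iic x ∩ K) := by
  rw [piProj, Icc_sInf_inter_eq_Iic_inter hK, measureReal_def]

lemma volume_Iic_inter_eq_ofReal_piProj (hK : IsCompact K) (x : ℝ) :
    volume (Iic x ∩ K) = ENNReal.ofReal (piProj K x) := by
  rw [piProj_eq_measureReal hK.bddBelow, measureReal_def, ENNReal.ofReal_toReal
    (measure_ne_top_of_subset inter_subset_right (hK.measure_lt_top (μ := volume)).ne)]

lemma piProj_sub_piProj (hK : IsCompact K) {x y : ℝ} (hxy : x ≤ y) :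
    piProj K y - piProj K x = volume.real (Ioc x y ∩ K) := by
  have hKfin : volume K ≠ ⊤ := hK.measure_lt_top.ne
  have hunion : Iic y ∩ K = (Iic x ∩ K) ∪ (Ioc x y ∩ K) := by
    rw [← union_inter_distrib_right, Iic_union_Ioc_eq_Iic hxy]
  have hdisj : Disjoint (Iic x ∩ K) (Ioc x y ∩ K) :=
    (Iic_disjoint_Ioc le_rfl).mono inter_subset_left inter_subset_left
  rw [piProj_eq_measureReal hK.bddBelow, piProj_eq_measureReal hK.bddBelow, hunion,
    measureReal_union hdisj (measurableSet_Ioc.inter hK.measurableSet)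
      (measure_ne_top_of_subset inter_subset_right hKfin)
      (measure_ne_top_of_subset inter_subset_right hKfin)]
  ring

lemma piProj_monotone (hK : IsCompact K) : Monotone (piProj K) := fun x y hxy => by
  linarith [piProj_sub_piProj hK hxy, measureReal_nonneg (μ := volume) (s := Ioc x y ∩ K)]

lemma lipschitzWith_one_piProj (hK : IsCompact K) : LipschitzWith 1 (piProj K) := by
  refine LipschitzWith.of_le_add_mul 1 fun x y => ?_
  rw [NNReal.coe_one, one_mul]
  rcases le_total x y with hxy | hyx
  · linarith [piProj_monotone hK hxy, dist_nonneg (x := x) (y := y)]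
  · have hle : volume.real (Ioc y x ∩ K) ≤ x - y := by
      simpa [hyx] using measureReal_mono (μ := volume) (s₂ := Ioc y x) inter_subset_left
        measure_Ioc_lt_top.ne
    rw [Real.dist_eq, abs_of_nonneg (sub_nonneg.2 hyx)]
    linarith [piProj_sub_piProj hK hyx]

lemma continuous_piProj (hK : IsCompact K) : Continuous (piProj K) :=
  (lipschitzWith_one_piProj hK).continuous

lemma piProj_sInf (hK : IsCompact K) : piProj K (sInf K) = 0 := by
  have hsub : Iic (sInf K) ∩ K ⊆ {sInf K} := fun y hy =>
    le_antisymm hy.1 (csInf_le hK.bddBelow hy.2)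
  rw [piProj_eq_measureReal hK.bddBelow, measureReal_def,
    measure_mono_null hsub (measure_singleton _), ENNReal.toReal_zero]

lemma piProj_sSup (hK : IsCompact K) : piProj K (sSup K) = volume.real K := by
  rw [piProj_eq_measureReal hK.bddBelow,
    (inter_eq_right (s := Iic (sSup K))).2 fun y hy => le_csSup hK.bddAbove hy]

lemma piProj_le_measureReal (hK : IsCompact K) (x : ℝ) : piProj K x ≤ volume.real K := by
  rw [piProj_eq_measureReal hK.bddBelow]
  exact measureReal_mono inter_subset_right hK.measure_lt_top.ne

lemma piProj_sSup_inter_Iic (hK : IsCompact K) {x : ℝ} (hx : (K ∩ Iic x).Nonempty) :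
    piProj K (sSup (K ∩ Iic x)) = piProj K x := by
  have hbdd : BddAbove (K ∩ Iic x) := bddAbove_Iic.mono inter_subset_right
  have heq : Iic (sSup (K ∩ Iic x)) ∩ K = Iic x ∩ K := by
    refine Subset.antisymm (inter_subset_inter_left _ (Iic_subset_Iic.2 ?_)) ?_
    · exact csSup_le hx fun y hy => hy.2
    · exact fun y hy => ⟨le_csSup hbdd ⟨hy.2, hy.1⟩, hy.2⟩
  rw [piProj_eq_measureReal hK.bddBelow, piProj_eq_measureReal hK.bddBelow, heq]

lemma exists_mem_piProj_eq (hK : IsCompact K) (hne : K.Nonempty) {t : ℝ}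
    (ht : t ∈ Icc 0 (volume.real K)) : ∃ x ∈ K, piProj K x = t := by
  have hIVT := intermediate_value_Icc (csInf_le_csSup hne hK.bddBelow hK.bddAbove)
    (continuous_piProj hK).continuousOn
  rw [piProj_sInf hK, piProj_sSup hK] at hIVT
  obtain ⟨x, hx, rfl⟩ := hIVT ht
  have hsub : (K ∩ Iic x).Nonempty := ⟨sInf K, hK.sInf_mem hne, hx.1⟩
  exact ⟨_, ((hK.inter_right isClosed_Iic).sSup_mem hsub).1, piProj_sSup_inter_Iic hK hsub⟩

lemma piProj_sigmaSel (hK : IsCompact K) (hne : K.Nonempty) {t : ℝ}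
    (ht : t ∈ Icc 0 (volume.real K)) : piProj K (sigmaSel K t) = t := by
  have hcpt : IsCompact {x ∈ K | piProj K x = t} :=
    hK.inter_right (isClosed_singleton.preimage (continuous_piProj hK))
  exact (hcpt.sInf_mem (exists_mem_piProj_eq hK hne ht)).2

lemma Iic_sigmaSel_inter_ae_eq (hK : IsCompact K) (hne : K.Nonempty) {t : ℝ}
    (ht : t ∈ Icc 0 (volume.real K)) :
    (Iic (sigmaSel K t) ∩ K : Set ℝ) =ᵐ[volume] (piProj K ⁻¹' Iic t ∩ K : Set ℝ) := by
  have hσ := piProj_sigmaSel hK hne ht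
  have hsub : Iic (sigmaSel K t) ∩ K ⊆ piProj K ⁻¹' Iic t ∩ K :=
    fun y hy => ⟨hσ ▸ piProj_monotone hK hy.1, hy.2⟩
  refine ae_eq_of_subset_of_measure_ge hsub ?_
    (measurableSet_Iic.inter hK.measurableSet).nullMeasurableSet
    (measure_ne_top_of_subset inter_subset_right hK.measure_lt_top.ne)
  rcases (piProj K ⁻¹' Iic t ∩ K).eq_empty_or_nonempty with hempty | hS
  · simp [hempty]
  -- the preimage ends at its maximum, where `π_K ≤ t = π_K (σ_K t)`
  have hcpt : IsCompact (piProj K ⁻¹' Iic t ∩ K) :=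
    hK.inter_left (isClosed_Iic.preimage (continuous_piProj hK))
  have hd := hcpt.sSup_mem hS
  calc volume (piProj K ⁻¹' Iic t ∩ K)
      ≤ volume (Iic (sSup (piProj K ⁻¹' Iic t ∩ K)) ∩ K) :=
        measure_mono fun y hy => ⟨le_csSup hcpt.bddAbove hy, hy.2⟩
    _ ≤ volume (Iic (sigmaSel K t) ∩ K) := by
        rw [volume_Iic_inter_eq_ofReal_piProj hK, volume_Iic_inter_eq_ofReal_piProj hK, hσ]
        exact ENNReal.ofReal_le_ofReal hd.1

lemma volume_piProj_preimage_Iic_inter (hK : IsCompact K) (hne : K.Nonempty) {t : ℝ}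
    (ht : t ∈ Icc 0 (volume.real K)) :
    volume (piProj K ⁻¹' Iic t ∩ K) = ENNReal.ofReal t := by
  rw [← measure_congr (Iic_sigmaSel_inter_ae_eq hK hne ht),
    volume_Iic_inter_eq_ofReal_piProj hK, piProj_sigmaSel hK hne ht]

lemma measurePreserving_piProj (hK : IsCompact K) (hne : K.Nonempty) :
    MeasurePreserving (piProj K) (volume.restrict K)
      (volume.restrict (Icc 0 (volume.real K))) := by
  have hmeas : Measurable (piProj K) := (continuous_piProj hK).measurable
  have : IsFiniteMeasure (volume.restrict K) :=
    isFiniteMeasure_restrict.2 hK.measure_lt_top.ne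
  refine ⟨hmeas, Measure.ext_of_Iic _ _ fun r => ?_⟩
  rw [Measure.map_apply hmeas measurableSet_Iic, Measure.restrict_apply measurableSet_Iic,
    Measure.restrict_apply (hmeas measurableSet_Iic)]
  rcases lt_or_ge r 0 with hr | hr
  · have hπ : piProj K ⁻¹' Iic r = ∅ :=
      eq_empty_of_forall_notMem fun x hx => (lt_of_le_of_lt hx hr).not_ge measureReal_nonneg
    have hIcc : Iic r ∩ Icc 0 (volume.real K) = ∅ :=
      eq_empty_of_forall_notMem fun x hx => (lt_of_le_of_lt hx.1 hr).not_ge hx.2.1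
    rw [hπ, hIcc, empty_inter, measure_empty]
  · have hr' : min r (volume.real K) ∈ Icc 0 (volume.real K) :=
      ⟨le_min hr measureReal_nonneg, min_le_right _ _⟩
    have hπ : piProj K ⁻¹' Iic r ∩ K = piProj K ⁻¹' Iic (min r (volume.real K)) ∩ K := by
      ext x
      simp only [mem_inter_iff, mem_preimage, mem_Iic, le_min_iff,
        and_iff_left (piProj_le_measureReal hK x)]
    have hIcc : Iic r ∩ Icc 0 (volume.real K) = Icc 0 (min r (volume.real K)) := by
      ext x
      simp only [mem_inter_iff, mem_Iic, mem_Icc, le_min_iff]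
      tauto
    rw [hπ, hIcc, volume_piProj_preimage_Iic_inter hK hne hr', Real.volume_Icc, sub_zero]

lemma JPrim_comp_piProj_sigmaSel (hK : IsCompact K) (hne : K.Nonempty) {g : ℝ → ℝ}
    (hg : Measurable g) {t : ℝ} (ht : t ∈ Icc 0 (volume.real K)) :
    JPrim K (g ∘ piProj K) (sigmaSel K t) = ∫ u in (0 : ℝ)..t, g u := by
  have hπ := measurePreserving_piProj hK hne
  have hIcc : Iic t ∩ Icc 0 (volume.real K) = Icc 0 t := by
    ext x
    simp only [mem_inter_iff, mem_Iic, mem_Icc]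
    exact ⟨fun h => ⟨h.2.1, h.1⟩, fun h => ⟨h.2, h.1, h.2.trans ht.2⟩⟩
  calc JPrim K (g ∘ piProj K) (sigmaSel K t)
      = ∫ y in piProj K ⁻¹' Iic t, g (piProj K y) ∂volume.restrict K := by
        rw [JPrim, Icc_sInf_inter_eq_Iic_inter hK.bddBelow,
          setIntegral_congr_set (Iic_sigmaSel_inter_ae_eq hK hne ht),
          Measure.restrict_restrict (hπ.measurable measurableSet_Iic), Function.comp_def]
    _ = ∫ u in Iic t, g u ∂volume.restrict (Icc 0 (volume.real K)) := by
        rw [← hπ.map_eq, setIntegral_map measurableSet_Iic hg.aestronglyMeasurable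
          hπ.measurable.aemeasurable]
    _ = ∫ u in (0 : ℝ)..t, g u := by
        rw [Measure.restrict_restrict measurableSet_Iic, hIcc, integral_Icc_eq_integral_Ioc,
          intervalIntegral.integral_of_le ht.1]

lemma JPrim_sub_JPrim (hK : IsCompact K) {f : ℝ → ℝ} (hf : IntegrableOn f K) {x y : ℝ}
    (hxy : x ≤ y) : JPrim K f y - JPrim K f x = ∫ z in Ioc x y ∩ K, f z := by
  have hunion : Iic y ∩ K = (Iic x ∩ K) ∪ (Ioc x y ∩ K) := by
    rw [← union_inter_distrib_right, Iic_union_Ioc_eq_Iic hxy]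
  have hdisj : Disjoint (Iic x ∩ K) (Ioc x y ∩ K) :=
    (Iic_disjoint_Ioc le_rfl).mono inter_subset_left inter_subset_left
  rw [JPrim, JPrim, Icc_sInf_inter_eq_Iic_inter hK.bddBelow,
    Icc_sInf_inter_eq_Iic_inter hK.bddBelow, hunion,
    setIntegral_union hdisj (measurableSet_Ioc.inter hK.measurableSet)
      (hf.mono_set inter_subset_right) (hf.mono_set inter_subset_right)]
  ring

lemma dist_JPrim_le (hK : IsCompact K) {f : ℝ → ℝ} (hf : MemLp f ⊤ (volume.restrict K))
    (x y : ℝ) :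
    dist (JPrim K f x) (JPrim K f y)
      ≤ lpNorm f ⊤ (volume.restrict K) * dist (piProj K x) (piProj K y) := by
  wlog hxy : x ≤ y generalizing x y
  · rw [dist_comm, dist_comm (piProj K x)]
    exact this y x (le_of_not_ge hxy)
  have : IsFiniteMeasure (volume.restrict K) := isFiniteMeasure_restrict.2 hK.measure_lt_top.ne
  rw [dist_comm (JPrim K f x), dist_comm (piProj K x), Real.dist_eq, Real.dist_eq,
    JPrim_sub_JPrim hK (hf.integrable le_top) hxy,
    abs_of_nonneg (sub_nonneg.2 (piProj_monotone hK hxy)), piProj_sub_piProj hK hxy]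
  exact norm_setIntegral_le_of_norm_le_const_ae
    ((measure_mono inter_subset_right).trans_lt hK.measure_lt_top)
    (ae_restrict_of_ae_restrict_of_subset inter_subset_right (ae_le_lpNorm_exponent_top hf))

lemma lipschitzOnWith_JPrim_comp_sigmaSel (hK : IsCompact K) (hne : K.Nonempty) {f : ℝ → ℝ}
    (hf : MemLp f ⊤ (volume.restrict K)) :
    LipschitzOnWith (lpNorm f ⊤ (volume.restrict K)).toNNReal
      (fun t => JPrim K f (sigmaSel K t)) (Icc 0 (volume.real K)) :=
  LipschitzOnWith.of_dist_le_mul fun s hs t ht => by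
    simpa only [piProj_sigmaSel hK hne hs, piProj_sigmaSel hK hne ht,
      Real.coe_toNNReal _ lpNorm_nonneg] using dist_JPrim_le hK hf (sigmaSel K s) (sigmaSel K t)

lemma JPrim_eq_zero_of_piProj_eq_zero (hK : IsCompact K) {f : ℝ → ℝ} {x : ℝ}
    (hx : piProj K x = 0) : JPrim K f x = 0 := by
  have hnull : volume (Iic x ∩ K) = 0 := by
    rw [volume_Iic_inter_eq_ofReal_piProj hK, hx, ENNReal.ofReal_zero]
  rw [JPrim, Icc_sInf_inter_eq_Iic_inter hK.bddBelow, Measure.restrict_eq_zero.2 hnull,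
    integral_zero_measure]

theorem stmt13 (K : Set ℝ) (hK : IsCompact K) (hpos : 0 < volume K) :
    -- the image of `L^∞(K)` consists of Lipschitz functions vanishing at 0
    (∀ f : ℝ → ℝ, Measurable f → MemLp f ⊤ (volume.restrict K) →
      JPrim K f (sigmaSel K 0) = 0 ∧
      ∃ L : NNReal, LipschitzOnWith L (fun t => JPrim K f (sigmaSel K t))
        (Set.Icc (0 : ℝ) (volume K).toReal)) ∧
    -- conversely, every Lipschitz function vanishing at 0 is attained:
    -- if `g` is an a.e. derivative of `G`, then `G = (J_K (g ∘ π_K)) ∘ σ_K`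
    (∀ G g : ℝ → ℝ, ∀ L : NNReal,
      LipschitzOnWith L G (Set.Icc (0 : ℝ) (volume K).toReal) → G 0 = 0 →
      Measurable g →
      (∀ᵐ t ∂(volume.restrict (Set.Icc (0 : ℝ) (volume K).toReal)),
        HasDerivAt G (g t) t) →
      ∀ t ∈ Set.Icc (0 : ℝ) (volume K).toReal,
        G t = JPrim K (g ∘ piProj K) (sigmaSel K t)) := by
  have hne : K.Nonempty := nonempty_of_measure_ne_zero hpos.ne'
  refine ⟨fun f _ hf => ⟨?_, _, lipschitzOnWith_JPrim_comp_sigmaSel hK hne hf⟩, ?_⟩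
  · exact JPrim_eq_zero_of_piProj_eq_zero hK
      (piProj_sigmaSel hK hne ⟨le_rfl, measureReal_nonneg⟩)
  · intro G g L hG hG0 hg hderiv t ht
    have hsub : Icc 0 t ⊆ Icc 0 (volume K).toReal := Icc_subset_Icc_right ht.2
    rw [JPrim_comp_piProj_sigmaSel hK hne hg ht,
      (hG.mono hsub).integral_eq_sub_of_ae_hasDerivAt ht.1
        (ae_restrict_of_ae_restrict_of_subset hsub hderiv), hG0, sub_zero]
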